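/- Let M = (m_{ij}) be a symmetric matrix with m_{ij} ≥ 2 for all i ≠ j, and set b_{ij} = a_{ij}^{m_{ij}} ∈ Br_n, with the conventions a_{ji} = a_{ij} and b_{ji} = b_{ij}. Then for all triples i,j,k in cyclic order (i.e. i<j<k, j<k<i, or k<i<j) with m_{ij} = m_{ik} = 2 and m_{jk} = 2ν+1 for an integer ν ≥ 1, the relations b_{ik} (b_{ij} b_{ik})^{ν−1} b_{jk} b_{ij} b_{ik} = (b_{ij} b_{ik})^{ν} b_{jk} b_{ij} = b_{ik} (b_{ij} b_{ik})^{ν} b_{jk} hold in Br_n. -/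

import Mathlib

/-!
For `p < q < r` the band generators satisfy the Birman–Ko–Lee relations
`a_{qr} a_{pq} = a_{pq} a_{pr} = a_{pr} a_{qr}`: they hold for `r = q + 1` by the braid relation
between `σ_q` and `a_{pq}`, and pass from `r` to `r + 1` by conjugating with `σ_r`, which commutes
with `a_{pq}`. For a cyclically ordered triple this gives `y x = x z = z y` with `x = a_{ij}`,
`y = a_{jk}`, `z = a_{ik}`.

From `y x = x z = z y` alone, conjugation by `d = x z` permutes `x ↦ z ↦ y ↦ x`, so `d³`
commutes with `x, y, z`, and `y² x² z² = d³`. Hence `(x² z²)^ν y^(2ν+1) = d^(3ν) y`, and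
all three words of the theorem equal `d^(3ν) y x² = d^(3ν+1) x`.
-/

/-- Relators for the braid group `Br_n` on generators `σ_1, …, σ_{n-1}`
(indexed by natural numbers; out-of-range generators are killed). -/
def braidRels (n : ℕ) : Set (FreeGroup ℕ) :=
  {r | (∃ i, 1 ≤ i ∧ i + 2 ≤ n ∧
        r = FreeGroup.of i * FreeGroup.of (i+1) * FreeGroup.of i *
            (FreeGroup.of (i+1) * FreeGroup.of i * FreeGroup.of (i+1))⁻¹) ∨
       (∃ i j, 1 ≤ i ∧ i + 2 ≤ j ∧ j + 1 ≤ n ∧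
        r = FreeGroup.of i * FreeGroup.of j * (FreeGroup.of j * FreeGroup.of i)⁻¹) ∨
       (∃ i, (i = 0 ∨ n ≤ i) ∧ r = FreeGroup.of i)}

/-- The braid group on `n` strands. -/
abbrev BraidGroup (n : ℕ) := PresentedGroup (braidRels n)

/-- The Artin generator `σ_i` of the braid group (`1 ≤ i ≤ n-1`). -/
def braidGen (n i : ℕ) : BraidGroup n := PresentedGroup.of i

/-- The band generator `a_{ij} = (σ_{j-1} ⋯ σ_{i+1}) σ_i (σ_{j-1} ⋯ σ_{i+1})⁻¹`. -/
def band (n i j : ℕ) : BraidGroup n :=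
  (((List.range (j - 1 - i)).map (fun t => braidGen n (j - 1 - t))).prod) * braidGen n i *
  (((List.range (j - 1 - i)).map (fun t => braidGen n (j - 1 - t))).prod)⁻¹

/-- The band generator with the convention `a_{ji} = a_{ij}`. -/
def bandS (n i j : ℕ) : BraidGroup n := band n (min i j) (max i j)

/-- The subgroup `E_M ≤ Br_n` generated by the powers `a_{ij}^{m_{ij}}`. -/
def bandSubgroup (n : ℕ) (m : ℕ → ℕ → ℕ) : Subgroup (BraidGroup n) :=
  Subgroup.closure {x | ∃ i j, 1 ≤ i ∧ i < j ∧ j ≤ n ∧ x = band n i j ^ m i j}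
/-- `b_{ij} = a_{ij}^{m_{ij}}` with the unordered-pair conventions `a_{ji} = a_{ij}`,
`b_{ji} = b_{ij}`. -/
def bp (n : ℕ) (m : ℕ → ℕ → ℕ) (i j : ℕ) : BraidGroup n := bandS n i j ^ m i j

section

variable {G : Type*} [Group G]

theorem braid_conj_of_commute {s t a : G} (hsa : s * a * s = a * s * a)
    (hst : s * t * s = t * s * t) (hta : Commute t a) :
    t * (s * a * s⁻¹) * t = s * a * s⁻¹ * t * (s * a * s⁻¹) := by
  have hc : s * a * s⁻¹ = a⁻¹ * s * a :=
    calc s * a * s⁻¹ = a⁻¹ * (a * s * a) * s⁻¹ := by group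
      _ = a⁻¹ * s * a := by rw [← hsa]; group
  have ht : a⁻¹ * t * a = t := by rw [mul_assoc, hta.eq, inv_mul_cancel_left]
  rw [hc]
  calc t * (a⁻¹ * s * a) * t
        = (a⁻¹ * t * a) * (a⁻¹ * s * a) * (a⁻¹ * t * a) := by rw [ht]
    _ = a⁻¹ * (t * s * t) * a := by group
    _ = a⁻¹ * (s * t * s) * a := by rw [hst]
    _ = (a⁻¹ * s * a) * (a⁻¹ * t * a) * (a⁻¹ * s * a) := by group
    _ = (a⁻¹ * s * a) * t * (a⁻¹ * s * a) := by rw [ht]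

structure IsBKLTriple (x y z : G) : Prop where
  yx_eq_xz : y * x = x * z
  xz_eq_zy : x * z = z * y

namespace IsBKLTriple

variable {x y z : G}

theorem rotate (h : IsBKLTriple x y z) : IsBKLTriple z x y :=
  ⟨h.xz_eq_zy, (h.yx_eq_xz.trans h.xz_eq_zy).symm⟩

theorem conj {g : G} (hg : Commute g x) (h : IsBKLTriple x y z) :
    IsBKLTriple x (g * y * g⁻¹) (g * z * g⁻¹) := by
  have hx : MulAut.conj g x = x := by rw [MulAut.conj_apply, hg.eq, mul_inv_cancel_right]
  have h₁ := congrArg (MulAut.conj g) h.yx_eq_xz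
  have h₂ := congrArg (MulAut.conj g) h.xz_eq_zy
  simp only [map_mul, hx] at h₁ h₂
  exact ⟨h₁, h₂⟩

theorem of_braid {s a : G} (h : s * a * s = a * s * a) : IsBKLTriple a s (s * a * s⁻¹) where
  yx_eq_xz := by simp only [← mul_assoc, ← h, mul_inv_cancel_right]
  xz_eq_zy := by simp only [← mul_assoc, ← h, mul_inv_cancel_right, inv_mul_cancel_right]

theorem semiconjBy_left (h : IsBKLTriple x y z) : SemiconjBy (x * z) x z :=
  calc x * z * x = z * y * x := by rw [h.xz_eq_zy]
    _ = z * (x * z) := by rw [mul_assoc, h.yx_eq_xz]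

theorem semiconjBy_mid (h : IsBKLTriple x y z) : SemiconjBy (x * z) y x := by
  rw [SemiconjBy, mul_assoc, ← h.xz_eq_zy]

theorem semiconjBy_right (h : IsBKLTriple x y z) : SemiconjBy (x * z) z y :=
  calc x * z * z = y * x * z := by rw [h.yx_eq_xz]
    _ = y * (x * z) := mul_assoc y x z

theorem commute_cube_mid (h : IsBKLTriple x y z) : Commute ((x * z) ^ 3) y := by
  rw [pow_three]
  exact h.semiconjBy_right.mul_left (h.semiconjBy_left.mul_left h.semiconjBy_mid)

theorem commute_cube_right (h : IsBKLTriple x y z) : Commute ((x * z) ^ 3) z := by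
  rw [pow_three]
  exact h.semiconjBy_left.mul_left (h.semiconjBy_mid.mul_left h.semiconjBy_right)

theorem sq_mul_sq_mul_sq (h : IsBKLTriple x y z) : y ^ 2 * x ^ 2 * z ^ 2 = (x * z) ^ 3 :=
  calc y ^ 2 * x ^ 2 * z ^ 2 = y * (y * x) * (x * z * z) := by simp only [sq, mul_assoc]
    _ = x * z * z * (x * z * z) := by rw [h.yx_eq_xz, h.semiconjBy_right.eq]
    _ = x * z * (z * (x * z)) * z := by simp only [mul_assoc]
    _ = (x * z) ^ 3 := by
      rw [← h.semiconjBy_left.eq]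
      simp only [pow_succ, pow_zero, one_mul, mul_assoc]

theorem mul_sq_eq_sq_mul (h : IsBKLTriple x y z) : y * x ^ 2 = z ^ 2 * y :=
  calc y * x ^ 2 = y * x * x := by rw [sq, mul_assoc]
    _ = z * (x * z) := by rw [h.yx_eq_xz, h.semiconjBy_left.eq]
    _ = z ^ 2 * y := by rw [h.xz_eq_zy, sq, mul_assoc]

theorem sq_mul_sq_pow_mul_pow (h : IsBKLTriple x y z) (k : ℕ) :
    (x ^ 2 * z ^ 2) ^ k * y ^ (2 * k + 1) = (x * z) ^ (3 * k) * y := by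
  have hc : x ^ 2 * z ^ 2 = (x * z) ^ 3 * (y ^ 2)⁻¹ := by
    rw [(h.commute_cube_mid.pow_right 2).inv_right.eq, ← h.sq_mul_sq_mul_sq]
    simp only [mul_assoc, inv_mul_cancel_left]
  rw [hc, (h.commute_cube_mid.pow_right 2).inv_right.mul_pow, ← pow_mul, inv_pow, ← pow_mul,
    pow_succ, mul_assoc, inv_mul_cancel_left]

theorem sq_sq_odd_pow_relations (h : IsBKLTriple x y z) {ν : ℕ} (hν : 1 ≤ ν) :
    z ^ 2 * (x ^ 2 * z ^ 2) ^ (ν - 1) * y ^ (2 * ν + 1) * x ^ 2 * z ^ 2 =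
        (x ^ 2 * z ^ 2) ^ ν * y ^ (2 * ν + 1) * x ^ 2 ∧
    (x ^ 2 * z ^ 2) ^ ν * y ^ (2 * ν + 1) * x ^ 2 =
        z ^ 2 * (x ^ 2 * z ^ 2) ^ ν * y ^ (2 * ν + 1) := by
  obtain ⟨μ, rfl⟩ : ∃ μ, ν = μ + 1 := ⟨ν - 1, by omega⟩
  rw [Nat.add_sub_cancel]
  have hP := h.sq_mul_sq_pow_mul_pow (μ + 1)
  have hz : Commute (z ^ 2) ((x * z) ^ (3 * (μ + 1))) := by
    rw [pow_mul]
    exact (h.commute_cube_right.pow_pow _ 2).symm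
  have second : (x ^ 2 * z ^ 2) ^ (μ + 1) * y ^ (2 * (μ + 1) + 1) * x ^ 2 =
      z ^ 2 * (x ^ 2 * z ^ 2) ^ (μ + 1) * y ^ (2 * (μ + 1) + 1) := by
    rw [hP, mul_assoc, mul_assoc, hP, h.mul_sq_eq_sq_mul, ← mul_assoc, ← mul_assoc, hz.eq]
  refine ⟨?_, second⟩
  rw [second]
  calc z ^ 2 * (x ^ 2 * z ^ 2) ^ μ * y ^ (2 * (μ + 1) + 1) * x ^ 2 * z ^ 2
      = z ^ 2 * ((x ^ 2 * z ^ 2) ^ μ * y ^ (2 * μ + 1) * (y ^ 2 * x ^ 2 * z ^ 2)) := by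
        rw [show 2 * (μ + 1) + 1 = 2 * μ + 1 + 2 by ring, pow_add]
        simp only [mul_assoc]
    _ = z ^ 2 * ((x * z) ^ (3 * (μ + 1)) * y) := by
        rw [h.sq_mul_sq_pow_mul_pow, h.sq_mul_sq_mul_sq, mul_assoc _ y, h.commute_cube_mid.symm.eq,
          ← mul_assoc ((x * z) ^ (3 * μ)), ← pow_add, mul_add, mul_one]
    _ = z ^ 2 * (x ^ 2 * z ^ 2) ^ (μ + 1) * y ^ (2 * (μ + 1) + 1) := by
        rw [← hP, mul_assoc]

end IsBKLTriple

end

theorem braidGen_braid {n i : ℕ} (h1 : 1 ≤ i) (h2 : i + 2 ≤ n) :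
    braidGen n i * braidGen n (i + 1) * braidGen n i =
      braidGen n (i + 1) * braidGen n i * braidGen n (i + 1) := by
  have := PresentedGroup.mk_eq_mk_of_mul_inv_mem (rels := braidRels n) (Or.inl ⟨i, h1, h2, rfl⟩)
  simp only [map_mul] at this
  exact this

theorem braidGen_commute {n i j : ℕ} (h1 : 1 ≤ i) (h2 : i + 2 ≤ j) (h3 : j + 1 ≤ n) :
    Commute (braidGen n i) (braidGen n j) := by
  have := PresentedGroup.mk_eq_mk_of_mul_inv_mem (rels := braidRels n)
    (Or.inr (Or.inl ⟨i, j, h1, h2, h3, rfl⟩))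
  simp only [map_mul] at this
  exact this

theorem band_self_succ (n i : ℕ) : band n i (i + 1) = braidGen n i := by
  simp [band]

theorem band_succ (n : ℕ) {i j : ℕ} (h : i < j) :
    band n i (j + 1) = braidGen n j * band n i j * (braidGen n j)⁻¹ := by
  have hlist : (List.range (j + 1 - 1 - i)).map (fun t => braidGen n (j + 1 - 1 - t)) =
      braidGen n j :: (List.range (j - 1 - i)).map (fun t => braidGen n (j - 1 - t)) := by
    rw [show j + 1 - 1 - i = j - 1 - i + 1 by omega, List.range_succ_eq_map, List.map_cons,
      List.map_map]
    congr 2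
    funext t
    simp only [Function.comp_apply]
    congr 1
    omega
  rw [band, band, hlist, List.prod_cons]
  group

theorem commute_braidGen_band {n p q m : ℕ} (hp : 1 ≤ p) (hpq : p < q) (hqm : q < m)
    (hm : m + 1 ≤ n) : Commute (braidGen n m) (band n p q) := by
  induction q, hpq using Nat.le_induction with
  | base => rw [band_self_succ]; exact (braidGen_commute hp (by omega) hm).symm
  | succ q hpq ih =>
    rw [band_succ n hpq]
    have hmq := (braidGen_commute (n := n) (i := q) (by omega) (by omega) hm).symm
    exact (hmq.mul_right (ih (by omega))).mul_right hmq.inv_right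

theorem braidGen_braid_band {n p q : ℕ} (hp : 1 ≤ p) (hpq : p < q) (hq : q + 1 ≤ n) :
    braidGen n q * band n p q * braidGen n q = band n p q * braidGen n q * band n p q := by
  induction q, hpq using Nat.le_induction with
  | base => rw [band_self_succ]; exact (braidGen_braid hp hq).symm
  | succ q hpq ih =>
    rw [band_succ n hpq]
    exact braid_conj_of_commute (ih (by omega)) (braidGen_braid (by omega) hq)
      (commute_braidGen_band hp hpq (by omega) hq)

theorem isBKLTriple_band {n p q r : ℕ} (hp : 1 ≤ p) (hpq : p < q) (hqr : q < r) (hr : r ≤ n) :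
    IsBKLTriple (band n p q) (band n q r) (band n p r) := by
  induction r, hqr using Nat.le_induction with
  | base =>
    rw [band_self_succ, band_succ n hpq]
    exact IsBKLTriple.of_braid (braidGen_braid_band hp hpq hr)
  | succ r hqr ih =>
    rw [band_succ n (hpq.trans hqr), band_succ n hqr]
    exact (ih (by omega)).conj (commute_braidGen_band hp hpq hqr hr)

theorem bandS_comm (n i j : ℕ) : bandS n i j = bandS n j i := by
  rw [bandS, bandS, min_comm, max_comm]

theorem bandS_of_lt (n : ℕ) {i j : ℕ} (h : i < j) : bandS n i j = band n i j := by
  rw [bandS, min_eq_left h.le, max_eq_right h.le]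

theorem isBKLTriple_bandS {n i j k : ℕ}
    (hcyc : (i < j ∧ j < k) ∨ (j < k ∧ k < i) ∨ (k < i ∧ i < j))
    (hi1 : 1 ≤ i) (hj1 : 1 ≤ j) (hk1 : 1 ≤ k) (hin : i ≤ n) (hjn : j ≤ n) (hkn : k ≤ n) :
    IsBKLTriple (bandS n i j) (bandS n j k) (bandS n i k) := by
  rcases hcyc with ⟨hij, hjk⟩ | ⟨hjk, hki⟩ | ⟨hki, hij⟩
  · rw [bandS_of_lt n hij, bandS_of_lt n hjk, bandS_of_lt n (hij.trans hjk)]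
    exact isBKLTriple_band hi1 hij hjk hkn
  · rw [bandS_comm n i j, bandS_comm n i k, bandS_of_lt n (hjk.trans hki), bandS_of_lt n hjk,
      bandS_of_lt n hki]
    exact (isBKLTriple_band hj1 hjk hki hin).rotate
  · rw [bandS_comm n i k, bandS_comm n j k, bandS_of_lt n hij, bandS_of_lt n (hki.trans hij),
      bandS_of_lt n hki]
    exact (isBKLTriple_band hk1 hki hij hjn).rotate.rotate

theorem stmt15_general (n : ℕ) (m : ℕ → ℕ → ℕ)
    (i j k : ℕ) (hcyc : (i < j ∧ j < k) ∨ (j < k ∧ k < i) ∨ (k < i ∧ i < j))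
    (hi1 : 1 ≤ i) (hj1 : 1 ≤ j) (hk1 : 1 ≤ k) (hin : i ≤ n) (hjn : j ≤ n) (hkn : k ≤ n)
    (ν : ℕ) (hν : 1 ≤ ν) (hij : m i j = 2) (hik : m i k = 2) (hjk : m j k = 2 * ν + 1) :
    bp n m i k * (bp n m i j * bp n m i k) ^ (ν - 1) * bp n m j k * bp n m i j * bp n m i k =
        (bp n m i j * bp n m i k) ^ ν * bp n m j k * bp n m i j ∧
    (bp n m i j * bp n m i k) ^ ν * bp n m j k * bp n m i j =
        bp n m i k * (bp n m i j * bp n m i k) ^ ν * bp n m j k := by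
  unfold bp
  rw [hij, hik, hjk]
  exact (isBKLTriple_bandS hcyc hi1 hj1 hk1 hin hjn hkn).sq_sq_odd_pow_relations hν

theorem stmt15 (n : ℕ) (m : ℕ → ℕ → ℕ)
    (hsym : ∀ i j, m i j = m j i)
    (hM : ∀ i j, 1 ≤ i → i ≤ n → 1 ≤ j → j ≤ n → i ≠ j → 2 ≤ m i j)
    (i j k : ℕ) (hcyc : (i < j ∧ j < k) ∨ (j < k ∧ k < i) ∨ (k < i ∧ i < j))
    (hi1 : 1 ≤ i) (hj1 : 1 ≤ j) (hk1 : 1 ≤ k) (hin : i ≤ n) (hjn : j ≤ n) (hkn : k ≤ n)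
    (ν : ℕ) (hν : 1 ≤ ν) (hij : m i j = 2) (hik : m i k = 2) (hjk : m j k = 2 * ν + 1) :
    bp n m i k * (bp n m i j * bp n m i k) ^ (ν - 1) * bp n m j k * bp n m i j * bp n m i k =
        (bp n m i j * bp n m i k) ^ ν * bp n m j k * bp n m i j ∧
    (bp n m i j * bp n m i k) ^ ν * bp n m j k * bp n m i j =
        bp n m i k * (bp n m i j * bp n m i k) ^ ν * bp n m j k :=
  stmt15_general n m i j k hcyc hi1 hj1 hk1 hin hjn hkn ν hν hij hik hjk
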